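/- Lemma 3.4 (strict properness of the loss with known state embedding, discrete action model): in the demonstrator-model setup, assume w(i,s) > 0 for all i, s; fix d ∈ ℕ, a state embedding f : S → ℝ^d, and true demonstrator embeddings ω* = (ω*_1,…,ω*_m) ∈ (ℝ^d)^m, and parameterize expertise by ρ_ω(i,s) = σ(⟨f(s), ω_i⟩) for ω ∈ (ℝ^d)^m, with true expertise ρ* = ρ_{ω*}. Assume π*(·|s) is not the uniform distribution for every s ∈ S, and that for every s_0 ∈ S there exist s_1,…,s_r ∈ S and α_1,…,α_r ∈ ℝ with f(s_0) = ∑_{k=1}^r α_k · f(s_k) such that no real constants C_0,…,C_r with C_0 ≠ 1 satisfy both ρ*(i,s_k)/C_k ∈ (0,1) for all i, k and logit(ρ*(i,s_0)/C_0) = ∑_{k=1}^r α_k · logit(ρ*(i,s_k)/C_k) for all i ∈ {1,…,m}. Then for every candidate policy q and every ω ∈ (ℝ^d)^m, NLL(q, ρ_ω) ≥ NLL(π*, ρ_{ω*}), and equality holds only if q = π*. -/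

import Mathlib

/-- A distribution on a finite action set `A`: nonnegative and summing to 1. -/
def IsDist {A : Type*} [Fintype A] (p : A → ℝ) : Prop :=
  (∀ a, 0 ≤ p a) ∧ ∑ a, p a = 1

/-- The noised distribution: `noise p ρ (a) = ρ·p(a) + (1−ρ)/n` where `n = |A|`. -/
noncomputable def noise {A : Type*} [Fintype A] (p : A → ℝ) (ρ : ℝ) : A → ℝ :=
  fun a => ρ * p a + (1 - ρ) / (Fintype.card A : ℝ)

/-- The negative log-likelihood of a candidate policy `q` and candidate expertise levels `r`. -/
noncomputable def NLL {S A : Type*} [Fintype S] [Fintype A] {m : ℕ}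
    (πstar : S → A → ℝ) (ρstar : Fin m → S → ℝ) (w : Fin m → S → ℝ)
    (q : S → A → ℝ) (r : Fin m → S → ℝ) : ℝ :=
  -∑ i, ∑ s, w i s *
    ∑ a, noise (πstar s) (ρstar i s) a * Real.log (noise (q s) (r i s) a)

/-- The sigmoid function `σ(x) = 1/(1 + exp(−x))`, taking values in `(0,1)`. -/
noncomputable def sigmoid (x : ℝ) : ℝ := 1 / (1 + Real.exp (-x))

/-- The logit function `logit(y) = log(y/(1−y))`, the inverse of the sigmoid on `(0,1)`. -/
noncomputable def logit (y : ℝ) : ℝ := Real.log (y / (1 - y))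

/-- Expertise levels parameterized by demonstrator embeddings `ω` and state embedding `f`:
`ρ_ω(i,s) = σ(⟨f(s), ω_i⟩)`. -/
noncomputable def expertise {S : Type*} {m d : ℕ}
    (f : S → Fin d → ℝ) (ω : Fin m → Fin d → ℝ) : Fin m → S → ℝ :=
  fun i s => sigmoid (∑ j, f s j * ω i j)

/-!
Each summand of the NLL is a cross-entropy between noised distributions, so Gibbs' inequality
gives the lower bound, and equality forces `noise(π*(·|s), ρ*(i,s)) = noise(q(·|s), ρ_ω(i,s))`
for all `i, s`. Comparing the deviations from the uniform distribution at an action where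
`π*(·|s)` is not uniform shows `ρ_ω(i,s) = ρ*(i,s) / C(s)` with `C(s)` independent of `i`.
Since `logit ∘ ρ_ω(i,·)` is linear in the state embedding, the identifiability hypothesis
forces `C ≡ 1`, so the expertise levels agree and the noise can be inverted to get `q = π*`.
-/

open Finset InformationTheory
open Real hiding sigmoid

lemma mul_klFun_div (p : ℝ) {u : ℝ} (hu : u ≠ 0) :
    u * klFun (p / u) = p * log p - p * log u + (u - p) := by
  rcases eq_or_ne p 0 with rfl | hp
  · simp [klFun_zero]
  · rw [klFun_apply, log_div hp hu]
    field_simp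
    ring

section Gibbs

variable {ι : Type*} [Fintype ι] {p u : ι → ℝ}

lemma sum_mul_klFun_div (hu : ∀ a, u a ≠ 0) :
    ∑ a, u a * klFun (p a / u a) =
      ∑ a, p a * log (p a) - ∑ a, p a * log (u a) + (∑ a, u a - ∑ a, p a) := by
  simp only [mul_klFun_div _ (hu _), sum_add_distrib, sum_sub_distrib]

theorem sum_mul_log_le_sum_mul_log (hp : ∀ a, 0 ≤ p a) (hu : ∀ a, 0 < u a)
    (hsum : ∑ a, u a ≤ ∑ a, p a) :
    ∑ a, p a * log (u a) ≤ ∑ a, p a * log (p a) := by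
  have hgap := sum_mul_klFun_div (p := p) fun a => (hu a).ne'
  have hnonneg : 0 ≤ ∑ a, u a * klFun (p a / u a) :=
    sum_nonneg fun a _ => mul_nonneg (hu a).le (klFun_nonneg (div_nonneg (hp a) (hu a).le))
  linarith

theorem eq_of_sum_mul_log_eq (hp : ∀ a, 0 ≤ p a) (hu : ∀ a, 0 < u a)
    (hsum : ∑ a, u a ≤ ∑ a, p a)
    (h : ∑ a, p a * log (u a) = ∑ a, p a * log (p a)) : p = u := by
  have hnonneg : ∀ a ∈ univ, 0 ≤ u a * klFun (p a / u a) := fun a _ =>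
    mul_nonneg (hu a).le (klFun_nonneg (div_nonneg (hp a) (hu a).le))
  have hzero : ∑ a, u a * klFun (p a / u a) = 0 :=
    le_antisymm (by linarith [sum_mul_klFun_div (p := p) fun a => (hu a).ne'])
      (sum_nonneg hnonneg)
  funext a
  have hkl := (sum_eq_zero_iff_of_nonneg hnonneg).mp hzero a (mem_univ a)
  rw [mul_eq_zero, or_iff_right (hu a).ne',
    klFun_eq_zero_iff (div_nonneg (hp a) (hu a).le), div_eq_one_iff_eq (hu a).ne'] at hkl
  exact hkl

end Gibbs

section Noise

variable {A : Type*} [Fintype A] {p q : A → ℝ} {ρ r : ℝ}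

lemma noise_pos [Nonempty A] (hp : ∀ a, 0 ≤ p a) (hρ : ρ ∈ Set.Ico 0 1) (a : A) :
    0 < noise p ρ a := by
  have huniform : 0 < (1 - ρ) / (Fintype.card A : ℝ) :=
    div_pos (by linarith [hρ.2]) (by exact_mod_cast Fintype.card_pos)
  exact add_pos_of_nonneg_of_pos (mul_nonneg hρ.1 (hp a)) huniform

lemma sum_noise [Nonempty A] (hp : ∑ a, p a = 1) (ρ : ℝ) : ∑ a, noise p ρ a = 1 := by
  have : (Fintype.card A : ℝ) ≠ 0 := by exact_mod_cast Fintype.card_ne_zero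
  simp only [noise, sum_add_distrib, ← mul_sum, hp, sum_const, card_univ, nsmul_eq_mul]
  field_simp
  ring

lemma IsDist.noise [Nonempty A] (hp : IsDist p) (hρ : ρ ∈ Set.Ico 0 1) :
    IsDist (noise p ρ) :=
  ⟨fun a => (noise_pos hp.1 hρ a).le, sum_noise hp.2 ρ⟩

lemma noise_sub_uniform (p : A → ℝ) (ρ : ℝ) (a : A) :
    noise p ρ a - 1 / (Fintype.card A : ℝ) = ρ * (p a - 1 / (Fintype.card A : ℝ)) := by
  simp only [noise]
  ring

lemma noise_left_injective (hρ : ρ ≠ 0) : Function.Injective (noise · ρ : (A → ℝ) → A → ℝ) := by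
  intro p q h
  funext a
  have := congrArg (· - 1 / (Fintype.card A : ℝ)) (congrFun h a)
  simp only [noise_sub_uniform] at this
  linarith [mul_left_cancel₀ hρ this]

lemma eq_div_of_noise_eq {a : A} (ha : p a ≠ 1 / (Fintype.card A : ℝ)) (hρ : ρ ≠ 0)
    (h : noise p ρ = noise q r) :
    r = ρ / ((q a - 1 / (Fintype.card A : ℝ)) / (p a - 1 / (Fintype.card A : ℝ))) := by
  have hdev := congrArg (· - 1 / (Fintype.card A : ℝ)) (congrFun h a)
  simp only [noise_sub_uniform] at hdev
  have hp : p a - 1 / (Fintype.card A : ℝ) ≠ 0 := sub_ne_zero_of_ne ha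
  have hq : q a - 1 / (Fintype.card A : ℝ) ≠ 0 := by
    intro hq
    rw [hq, mul_zero] at hdev
    exact mul_ne_zero hρ hp hdev
  rw [div_div_eq_mul_div, eq_div_iff hq]
  exact hdev.symm

lemma sum_noise_mul_log_le [Nonempty A] (hp : IsDist p) (hq : IsDist q)
    (hρ : ρ ∈ Set.Ico 0 1) (hr : r ∈ Set.Ico 0 1) :
    ∑ a, noise p ρ a * log (noise q r a) ≤ ∑ a, noise p ρ a * log (noise p ρ a) :=
  sum_mul_log_le_sum_mul_log (hp.noise hρ).1 (noise_pos hq.1 hr)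
    (by rw [sum_noise hp.2, sum_noise hq.2])

lemma noise_eq_of_sum_noise_mul_log_eq [Nonempty A] (hp : IsDist p) (hq : IsDist q)
    (hρ : ρ ∈ Set.Ico 0 1) (hr : r ∈ Set.Ico 0 1)
    (h : ∑ a, noise p ρ a * log (noise q r a) = ∑ a, noise p ρ a * log (noise p ρ a)) :
    noise p ρ = noise q r :=
  eq_of_sum_mul_log_eq (hp.noise hρ).1 (noise_pos hq.1 hr)
    (by rw [sum_noise hp.2, sum_noise hq.2]) h

end Noise

section NLL

variable {S A : Type*} [Fintype S] [Fintype A] [Nonempty A] {m : ℕ}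
  {πstar q : S → A → ℝ} {ρ r w : Fin m → S → ℝ}

lemma NLL_self_le (hw : ∀ i s, 0 ≤ w i s) (hπ : ∀ s, IsDist (πstar s))
    (hq : ∀ s, IsDist (q s)) (hρ : ∀ i s, ρ i s ∈ Set.Ico 0 1)
    (hr : ∀ i s, r i s ∈ Set.Ico 0 1) :
    NLL πstar ρ w πstar ρ ≤ NLL πstar ρ w q r :=
  neg_le_neg <| sum_le_sum fun i _ => sum_le_sum fun s _ =>
    mul_le_mul_of_nonneg_left (sum_noise_mul_log_le (hπ s) (hq s) (hρ i s) (hr i s)) (hw i s)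

lemma noise_eq_of_NLL_eq (hw : ∀ i s, 0 < w i s) (hπ : ∀ s, IsDist (πstar s))
    (hq : ∀ s, IsDist (q s)) (hρ : ∀ i s, ρ i s ∈ Set.Ico 0 1)
    (hr : ∀ i s, r i s ∈ Set.Ico 0 1) (h : NLL πstar ρ w q r = NLL πstar ρ w πstar ρ)
    (i : Fin m) (s : S) : noise (πstar s) (ρ i s) = noise (q s) (r i s) := by
  have hle : ∀ i s, w i s * ∑ a, noise (πstar s) (ρ i s) a * log (noise (q s) (r i s) a) ≤
      w i s * ∑ a, noise (πstar s) (ρ i s) a * log (noise (πstar s) (ρ i s) a) := fun i s =>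
    mul_le_mul_of_nonneg_left (sum_noise_mul_log_le (hπ s) (hq s) (hρ i s) (hr i s)) (hw i s).le
  have hrow := (sum_eq_sum_iff_of_le fun i _ => sum_le_sum fun s _ => hle i s).mp
    (neg_inj.mp h) i (mem_univ i)
  have hterm := (sum_eq_sum_iff_of_le fun s _ => hle i s).mp hrow s (mem_univ s)
  exact noise_eq_of_sum_noise_mul_log_eq (hπ s) (hq s) (hρ i s) (hr i s)
    (mul_left_cancel₀ (hw i s).ne' hterm)

end NLL

section Expertise

lemma sigmoid_eq_real_sigmoid (x : ℝ) : sigmoid x = Real.sigmoid x := one_div _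

lemma sigmoid_mem_Ioo (x : ℝ) : sigmoid x ∈ Set.Ioo 0 1 := by
  rw [sigmoid_eq_real_sigmoid]
  exact ⟨Real.sigmoid_pos x, Real.sigmoid_lt_one x⟩

lemma logit_sigmoid (x : ℝ) : logit (sigmoid x) = x := by
  rw [logit, sigmoid_eq_real_sigmoid, ← Real.sigmoid_neg x, ← Real.sigmoid_mul_rexp_neg x,
    div_mul_cancel_left₀ (Real.sigmoid_pos x).ne', log_inv, log_exp, neg_neg]

variable {S ι : Type*} [Fintype ι] {m d : ℕ} {f : S → Fin d → ℝ}

lemma logit_expertise_eq_sum {s₀ : S} {t : ι → S} {α : ι → ℝ}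
    (hlin : ∀ j, f s₀ j = ∑ k, α k * f (t k) j) (ω : Fin m → Fin d → ℝ) (i : Fin m) :
    logit (expertise f ω i s₀) = ∑ k, α k * logit (expertise f ω i (t k)) := by
  simp only [expertise, logit_sigmoid, hlin, sum_mul, mul_sum, mul_assoc]
  exact sum_comm

end Expertise

theorem strictly_proper_loss_general {S A : Type*} [Fintype S] [Fintype A] [Nonempty A]
    {m d : ℕ} (hm : 1 ≤ m)
    (πstar : S → A → ℝ) (hπ : ∀ s, IsDist (πstar s))
    (w : Fin m → S → ℝ) (hw : ∀ i s, 0 < w i s)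
    (f : S → Fin d → ℝ) (ωstar : Fin m → Fin d → ℝ)
    (hnu : ∀ s, ∃ a, πstar s a ≠ 1 / (Fintype.card A : ℝ))
    (hident : ∀ s₀ : S, ∃ (r : ℕ) (t : Fin r → S) (α : Fin r → ℝ),
      (∀ j, f s₀ j = ∑ k, α k * f (t k) j) ∧
      ¬ ∃ (C₀ : ℝ) (C : Fin r → ℝ), C₀ ≠ 1 ∧
        (∀ i, expertise f ωstar i s₀ / C₀ ∈ Set.Ioo (0 : ℝ) 1) ∧
        (∀ i k, expertise f ωstar i (t k) / C k ∈ Set.Ioo (0 : ℝ) 1) ∧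
        (∀ i, logit (expertise f ωstar i s₀ / C₀) =
          ∑ k, α k * logit (expertise f ωstar i (t k) / C k))) :
    ∀ (q : S → A → ℝ), (∀ s, IsDist (q s)) → ∀ ω : Fin m → Fin d → ℝ,
      NLL πstar (expertise f ωstar) w q (expertise f ω) ≥
        NLL πstar (expertise f ωstar) w πstar (expertise f ωstar) ∧
      (NLL πstar (expertise f ωstar) w q (expertise f ω) =
        NLL πstar (expertise f ωstar) w πstar (expertise f ωstar) → q = πstar) := by
  intro q hq ω
  have hexp (ω : Fin m → Fin d → ℝ) i s : expertise f ω i s ∈ Set.Ioo 0 1 := sigmoid_mem_Ioo _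
  have hexpIco (ω : Fin m → Fin d → ℝ) i s : expertise f ω i s ∈ Set.Ico 0 1 :=
    Set.Ioo_subset_Ico_self (hexp ω i s)
  refine ⟨NLL_self_le (fun i s => (hw i s).le) hπ hq (hexpIco ωstar) (hexpIco ω), fun heq => ?_⟩
  have hnoise := noise_eq_of_NLL_eq hw hπ hq (hexpIco ωstar) (hexpIco ω) heq
  choose a₀ ha₀ using hnu
  set C : S → ℝ := fun s => (q s (a₀ s) - 1 / (Fintype.card A : ℝ)) /
    (πstar s (a₀ s) - 1 / (Fintype.card A : ℝ))
  have hscale i s : expertise f ω i s = expertise f ωstar i s / C s :=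
    eq_div_of_noise_eq (ha₀ s) (hexp ωstar i s).1.ne' (hnoise i s)
  have hC s₀ : C s₀ = 1 := by
    by_contra hne
    obtain ⟨r, t, α, hlin, hno⟩ := hident s₀
    refine hno ⟨C s₀, C ∘ t, hne, fun i => ?_, fun i k => ?_, fun i => ?_⟩
    · exact hscale i s₀ ▸ hexp ω i s₀
    · exact hscale i (t k) ▸ hexp ω i (t k)
    · simp only [Function.comp_apply, ← hscale]
      exact logit_expertise_eq_sum hlin ω i
  funext s
  have hρ := hnoise ⟨0, hm⟩ s
  rw [hscale, hC, div_one] at hρ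
  exact (noise_left_injective (hexp ωstar ⟨0, hm⟩ s).1.ne' hρ).symm

/-- Lemma 3.4 (strict properness of the loss with known state embedding, discrete action
model): with positive weights `w`, expertise parameterized by `ρ_ω(i,s) = σ(⟨f(s), ω_i⟩)`,
the true policy non-uniform at every state, and for every state `s_0` a linear dependence
`f(s_0) = ∑_k α_k f(s_k)` such that no constants `C_0,…,C_r` with `C_0 ≠ 1` satisfy both
`ρ*(i,s_k)/C_k ∈ (0,1)` for all `i,k` and
`logit(ρ*(i,s_0)/C_0) = ∑_k α_k·logit(ρ*(i,s_k)/C_k)` for all `i`, we have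
`NLL(q, ρ_ω) ≥ NLL(π*, ρ_{ω*})` for every candidate `(q, ω)`, with equality only if
`q = π*`. -/
theorem strictly_proper_loss {S A : Type*} [Fintype S] [Fintype A] [Nonempty S] [Nonempty A]
    {m d : ℕ} (hm : 1 ≤ m)
    (πstar : S → A → ℝ) (hπ : ∀ s, IsDist (πstar s))
    (w : Fin m → S → ℝ) (hw : ∀ i s, 0 < w i s) (hw1 : ∑ i, ∑ s, w i s = 1)
    (f : S → Fin d → ℝ) (ωstar : Fin m → Fin d → ℝ)
    (hnu : ∀ s, ∃ a, πstar s a ≠ 1 / (Fintype.card A : ℝ))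
    (hident : ∀ s₀ : S, ∃ (r : ℕ) (t : Fin r → S) (α : Fin r → ℝ),
      (∀ j, f s₀ j = ∑ k, α k * f (t k) j) ∧
      ¬ ∃ (C₀ : ℝ) (C : Fin r → ℝ), C₀ ≠ 1 ∧
        (∀ i, expertise f ωstar i s₀ / C₀ ∈ Set.Ioo (0 : ℝ) 1) ∧
        (∀ i k, expertise f ωstar i (t k) / C k ∈ Set.Ioo (0 : ℝ) 1) ∧
        (∀ i, logit (expertise f ωstar i s₀ / C₀) =
          ∑ k, α k * logit (expertise f ωstar i (t k) / C k))) :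
    ∀ (q : S → A → ℝ), (∀ s, IsDist (q s)) → ∀ ω : Fin m → Fin d → ℝ,
      NLL πstar (expertise f ωstar) w q (expertise f ω) ≥
        NLL πstar (expertise f ωstar) w πstar (expertise f ωstar) ∧
      (NLL πstar (expertise f ωstar) w q (expertise f ω) =
        NLL πstar (expertise f ωstar) w πstar (expertise f ωstar) → q = πstar) :=
  strictly_proper_loss_general hm πstar hπ w hw f ωstar hnu hident
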